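/- Let (X, d, ≪, ≤, τ) be a strongly causal Lorentzian length space. Then for each x ∈ X there exists an open neighborhood V of x such that the restriction of τ to V × V is continuous. -/

import Mathlib

open scoped NNReal ENNReal
open Set Filter Topology

/-- A Lorentzian pre-length space: a causal space `(X, ≪, ≤)` carried by a metric space `X`,
together with a time separation function `τ : X × X → [0, ∞]`. -/
structure LorentzianPreLengthSpace (X : Type*) [MetricSpace X] where
  /-- The chronological relation `≪`. -/
  chron : X → X → Prop
  /-- The causal relation `≤`. -/
  causal : X → X → Prop
  chron_trans : ∀ {x y z : X}, chron x y → chron y z → chron x z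
  causal_refl : ∀ x : X, causal x x
  causal_trans : ∀ {x y z : X}, causal x y → causal y z → causal x z
  chron_imp_causal : ∀ {x y : X}, chron x y → causal x y
  /-- The time separation function `τ`. -/
  tau : X → X → ℝ≥0∞
  tau_lsc : LowerSemicontinuous fun p : X × X => tau p.1 p.2
  tau_rev_triangle : ∀ {x y z : X}, causal x y → causal y z → tau x y + tau y z ≤ tau x z
  tau_eq_zero : ∀ {x y : X}, ¬ causal x y → tau x y = 0
  tau_pos_iff : ∀ {x y : X}, 0 < tau x y ↔ chron x y

namespace LorentzianPreLengthSpace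

variable {X : Type*} [MetricSpace X] (L : LorentzianPreLengthSpace X)

/-- Chronological future `I⁺(x)`. -/
def Iplus (x : X) : Set X := {y | L.chron x y}

/-- Chronological past `I⁻(x)`. -/
def Iminus (x : X) : Set X := {y | L.chron y x}

/-- Causal future `J⁺(x)`. -/
def Jplus (x : X) : Set X := {y | L.causal x y}

/-- Causal past `J⁻(x)`. -/
def Jminus (x : X) : Set X := {y | L.causal y x}

/-- A future directed causal curve on `[a,b]`: non-constant, Lipschitz, and order preserving
from the order of `[a,b]` to the causal relation. -/
def IsFutureCausalCurve (γ : ℝ → X) (a b : ℝ) : Prop :=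
  a < b ∧ (∃ K : ℝ≥0, LipschitzOnWith K γ (Icc a b)) ∧
    (∃ s ∈ Icc a b, ∃ t ∈ Icc a b, γ s ≠ γ t) ∧
    ∀ ⦃s⦄, s ∈ Icc a b → ∀ ⦃t⦄, t ∈ Icc a b → s < t → L.causal (γ s) (γ t)

/-- A future directed timelike curve on `[a,b]`. -/
def IsFutureTimelikeCurve (γ : ℝ → X) (a b : ℝ) : Prop :=
  a < b ∧ (∃ K : ℝ≥0, LipschitzOnWith K γ (Icc a b)) ∧
    (∃ s ∈ Icc a b, ∃ t ∈ Icc a b, γ s ≠ γ t) ∧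
    ∀ ⦃s⦄, s ∈ Icc a b → ∀ ⦃t⦄, t ∈ Icc a b → s < t → L.chron (γ s) (γ t)

/-- The `τ`-length of a curve: the infimum over all partitions
`a = t₀ < t₁ < ⋯ < t_N = b` (with `N ≥ 1`) of `∑ τ(γ(tᵢ), γ(tᵢ₊₁))`. -/
noncomputable def tauLength (γ : ℝ → X) (a b : ℝ) : ℝ≥0∞ :=
  ⨅ n : ℕ, ⨅ t : {t : Fin (n + 2) → ℝ // StrictMono t ∧ t 0 = a ∧ t (Fin.last (n + 1)) = b},
    ∑ i : Fin (n + 1), L.tau (γ (t.1 i.castSucc)) (γ (t.1 i.succ))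

/-- Causal path connectedness: causally related (distinct) points are joined by a future
directed causal curve, chronologically related points by a future directed timelike curve. -/
def CausallyPathConnected : Prop :=
  (∀ x y : X, L.causal x y → x ≠ y →
      ∃ γ : ℝ → X, ∃ a b : ℝ, L.IsFutureCausalCurve γ a b ∧ γ a = x ∧ γ b = y) ∧
  (∀ x y : X, L.chron x y →
      ∃ γ : ℝ → X, ∃ a b : ℝ, L.IsFutureTimelikeCurve γ a b ∧ γ a = x ∧ γ b = y)

/-- `p ≤_U q`: there is a future directed causal curve from `p` to `q` with image in `U`. -/
def CausalInside (U : Set X) (p q : X) : Prop :=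
  ∃ γ : ℝ → X, ∃ a b : ℝ, L.IsFutureCausalCurve γ a b ∧ γ a = p ∧ γ b = q ∧ γ '' Icc a b ⊆ U

/-- `U` is causally closed: the relation `≤_U` is closed under limits inside `U`. -/
def CausallyClosedNbhd (U : Set X) : Prop :=
  ∀ (p q : X) (pn qn : ℕ → X), (∀ n, L.CausalInside U (pn n) (qn n)) →
    Tendsto pn atTop (𝓝 p) → Tendsto qn atTop (𝓝 q) → p ∈ U → q ∈ U → L.CausalInside U p q

/-- Every point has a causally closed open neighborhood. -/
def LocallyCausallyClosed : Prop :=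
  ∀ x : X, ∃ U : Set X, IsOpen U ∧ x ∈ U ∧ L.CausallyClosedNbhd U

/-- Localizability: every point has a localizing open neighborhood `Ω`. -/
def Localizable : Prop :=
  ∀ x : X, ∃ Ω : Set X, IsOpen Ω ∧ x ∈ Ω ∧
    (∃ C : ℝ≥0, ∀ (γ : ℝ → X) (a b : ℝ), L.IsFutureCausalCurve γ a b →
        γ '' Icc a b ⊆ Ω → eVariationOn γ (Icc a b) ≤ C) ∧
    ∃ ω : X → X → ℝ≥0∞,
      ContinuousOn (fun pq : X × X => ω pq.1 pq.2) (Ω ×ˢ Ω) ∧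
      (∀ p ∈ Ω, ∀ q ∈ Ω, ω p q ≠ ⊤) ∧
      (∀ p ∈ Ω, ∀ q ∈ Ω, ∀ r ∈ Ω, L.causal p q → L.causal q r → ω p q + ω q r ≤ ω p r) ∧
      (∀ p ∈ Ω, ∀ q ∈ Ω, ¬ L.causal p q → ω p q = 0) ∧
      (∀ p ∈ Ω, ∀ q ∈ Ω, (0 < ω p q ↔ L.chron p q)) ∧
      (∀ y ∈ Ω, (L.Iplus y ∩ Ω).Nonempty ∧ (L.Iminus y ∩ Ω).Nonempty) ∧
      (∀ p ∈ Ω, ∀ q ∈ Ω, L.causal p q → p ≠ q →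
        ∃ γ : ℝ → X, ∃ a b : ℝ, L.IsFutureCausalCurve γ a b ∧ γ a = p ∧ γ b = q ∧
          γ '' Icc a b ⊆ Ω ∧ L.tauLength γ a b = ω p q ∧
          ∀ (σ : ℝ → X) (c e : ℝ), L.IsFutureCausalCurve σ c e → σ c = p → σ e = q →
            σ '' Icc c e ⊆ Ω → L.tauLength σ c e ≤ L.tauLength γ a b)

/-- `L` is a Lorentzian length space: causally path connected, locally causally closed,
localizable, and `τ` is the supremum of `τ`-lengths of connecting causal curves
(the supremum of the empty set being `0`). -/
def IsLengthSpace : Prop :=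
  L.CausallyPathConnected ∧ L.LocallyCausallyClosed ∧ L.Localizable ∧
    ∀ x y : X, L.tau x y = sSup {ℓ : ℝ≥0∞ | ∃ γ : ℝ → X, ∃ a b : ℝ,
      L.IsFutureCausalCurve γ a b ∧ γ a = x ∧ γ b = y ∧ ℓ = L.tauLength γ a b}

/-- `K⁺`: the smallest closed and transitive relation containing `J⁺`. -/
def Kplus : Set (X × X) :=
  ⋂₀ {R : Set (X × X) | IsClosed R ∧ (∀ a b c : X, (a, b) ∈ R → (b, c) ∈ R → (a, c) ∈ R) ∧
      {pq : X × X | L.causal pq.1 pq.2} ⊆ R}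

/-- The Alexandrov topology, generated by the chronological diamonds. -/
def AlexandrovTopology : TopologicalSpace X :=
  TopologicalSpace.generateFrom {s : Set X | ∃ x y : X, s = L.Iplus x ∩ L.Iminus y}

/-- Strong causality: the Alexandrov topology coincides with the metric topology. -/
def StronglyCausal : Prop :=
  L.AlexandrovTopology = (inferInstance : TopologicalSpace X)

/-- Non-total imprisonment: causal curves in a compact set have uniformly bounded
`d`-arclength. -/
def NonTotallyImprisoning : Prop :=
  ∀ K : Set X, IsCompact K → ∃ C : ℝ≥0, ∀ (γ : ℝ → X) (a b : ℝ),
    L.IsFutureCausalCurve γ a b → γ '' Icc a b ⊆ K → eVariationOn γ (Icc a b) ≤ C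

/-- Global hyperbolicity. -/
def GloballyHyperbolic : Prop :=
  L.NonTotallyImprisoning ∧ ∀ x y : X, IsCompact (L.Jplus x ∩ L.Jminus y)

/-- Causality: the causal relation is antisymmetric. -/
def Causal : Prop := ∀ x y : X, L.causal x y → L.causal y x → x = y

/-- Causal simplicity. -/
def CausallySimple : Prop :=
  L.Causal ∧ ∀ x : X, IsClosed (L.Jplus x) ∧ IsClosed (L.Jminus x)

/-- Distinguishing. -/
def Distinguishing : Prop :=
  (∀ x y : X, L.Iplus x = L.Iplus y → x = y) ∧ (∀ x y : X, L.Iminus x = L.Iminus y → x = y)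

/-- Reflectivity. -/
def Reflective : Prop :=
  (∀ x y : X, L.Iplus x ⊆ L.Iplus y → L.Iminus y ⊆ L.Iminus x) ∧
  (∀ x y : X, L.Iminus y ⊆ L.Iminus x → L.Iplus x ⊆ L.Iplus y)

/-- Causal continuity. -/
def CausallyContinuous : Prop := L.Distinguishing ∧ L.Reflective

/-- Stable causality: `K⁺` is antisymmetric. -/
def StablyCausal : Prop := ∀ x y : X, (x, y) ∈ L.Kplus → (y, x) ∈ L.Kplus → x = y

end LorentzianPreLengthSpace

/-- A distance homothetic map: `τ̃(f p, f q) = c · τ(p, q)` for some constant `c > 0`. -/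
def DistanceHomothetic {X Y : Type*} [MetricSpace X] [MetricSpace Y]
    (LX : LorentzianPreLengthSpace X) (LY : LorentzianPreLengthSpace Y) (f : X → Y) : Prop :=
  ∃ c : ℝ≥0, 0 < c ∧ ∀ p q : X, LY.tau (f p) (f q) = (c : ℝ≥0∞) * LX.tau p q

/-- A locally causally Lipschitz map. -/
def LocallyCausallyLipschitz {X Y : Type*} [MetricSpace X] [MetricSpace Y]
    (LX : LorentzianPreLengthSpace X) (f : X → Y) : Prop :=
  ∀ x : X, ∃ U : Set X, IsOpen U ∧ x ∈ U ∧ ∃ M : ℝ, 0 < M ∧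
    ∀ x1 ∈ U, ∀ x2 ∈ U, LX.causal x1 x2 → dist (f x1) (f x2) ≤ M * dist x1 x2

/-!
Strong causality gives arbitrarily small causally convex open neighbourhoods: finite
intersections of diamonds `I⁺(a) ∩ I⁻(b)`. Take one, `V`, inside a localizing neighbourhood `Ω`
of `x`. A causal curve between points of `V` stays in `V`, hence in `Ω`, so the maximal curve
given by localizability is maximal among all causal curves and `τ = ω` on `V × V` (on the
diagonal both vanish, as `ω(p, p)` is finite with `ω(p, p) + ω(p, p) ≤ ω(p, p)`). Thus `τ`
agrees on `V × V` with the continuous `ω`.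
-/

lemma ENNReal.eq_zero_of_add_self_le {a : ℝ≥0∞} (ha : a ≠ ⊤) (h : a + a ≤ a) : a = 0 :=
  nonpos_iff_eq_zero.mp <| ENNReal.le_of_add_le_add_right ha (by rwa [zero_add])

namespace LorentzianPreLengthSpace

variable {X : Type*} [MetricSpace X] (L : LorentzianPreLengthSpace X)

lemma tau_eq_zero_of_not_chron {x y : X} (h : ¬ L.chron x y) : L.tau x y = 0 :=
  nonpos_iff_eq_zero.mp (not_lt.mp (L.tau_pos_iff.not.mpr h))

lemma chron_of_chron_of_causal {x y z : X} (hxy : L.chron x y) (hyz : L.causal y z) :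
    L.chron x z :=
  L.tau_pos_iff.mp <| (L.tau_pos_iff.mpr hxy).trans_le <|
    le_self_add.trans (L.tau_rev_triangle (L.chron_imp_causal hxy) hyz)

lemma chron_of_causal_of_chron {x y z : X} (hxy : L.causal x y) (hyz : L.chron y z) :
    L.chron x z :=
  L.tau_pos_iff.mp <| (L.tau_pos_iff.mpr hyz).trans_le <|
    le_add_self.trans (L.tau_rev_triangle hxy (L.chron_imp_causal hyz))

def IsCausallyConvex (V : Set X) : Prop :=
  ∀ ⦃p q z : X⦄, p ∈ V → q ∈ V → L.causal p z → L.causal z q → z ∈ V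

lemma isCausallyConvex_diamond (a b : X) : L.IsCausallyConvex (L.Iplus a ∩ L.Iminus b) :=
  fun _ _ _ hp hq hpz hzq =>
    ⟨L.chron_of_chron_of_causal hp.1 hpz, L.chron_of_causal_of_chron hzq hq.2⟩

lemma isCausallyConvex_sInter {S : Set (Set X)} (hS : ∀ s ∈ S, L.IsCausallyConvex s) :
    L.IsCausallyConvex (⋂₀ S) :=
  fun _ _ _ hp hq hpz hzq s hs => hS s hs (hp s hs) (hq s hs) hpz hzq

lemma exists_isOpen_isCausallyConvex_subset (hsc : L.StronglyCausal) {U : Set X}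
    (hU : IsOpen U) {x : X} (hx : x ∈ U) :
    ∃ V, IsOpen V ∧ L.IsCausallyConvex V ∧ x ∈ V ∧ V ⊆ U := by
  have hbasis := TopologicalSpace.isTopologicalBasis_of_subbasis hsc.symm
  obtain ⟨_, ⟨F, hF, rfl⟩, hxV, hVU⟩ := hbasis.exists_subset_of_mem_open hx hU
  refine ⟨⋂₀ F, hbasis.isOpen ⟨F, hF, rfl⟩, L.isCausallyConvex_sInter fun s hs => ?_, hxV, hVU⟩
  obtain ⟨a, b, rfl⟩ := hF.2 hs
  exact L.isCausallyConvex_diamond a b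

variable {L}

lemma IsFutureCausalCurve.causal_start {γ : ℝ → X} {a b : ℝ} (hγ : L.IsFutureCausalCurve γ a b)
    {t : ℝ} (ht : t ∈ Icc a b) : L.causal (γ a) (γ t) := by
  rcases ht.1.eq_or_lt with rfl | hat
  · exact L.causal_refl _
  · exact hγ.2.2.2 (left_mem_Icc.mpr hγ.1.le) ht hat

lemma IsFutureCausalCurve.causal_end {γ : ℝ → X} {a b : ℝ} (hγ : L.IsFutureCausalCurve γ a b)
    {t : ℝ} (ht : t ∈ Icc a b) : L.causal (γ t) (γ b) := by
  rcases ht.2.eq_or_lt with rfl | htb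
  · exact L.causal_refl _
  · exact hγ.2.2.2 ht (right_mem_Icc.mpr hγ.1.le) htb

lemma IsCausallyConvex.image_subset {V : Set X} (hV : L.IsCausallyConvex V) {γ : ℝ → X}
    {a b : ℝ} (hγ : L.IsFutureCausalCurve γ a b) (ha : γ a ∈ V) (hb : γ b ∈ V) :
    γ '' Icc a b ⊆ V := by
  rintro _ ⟨t, ht, rfl⟩
  exact hV ha hb (hγ.causal_start ht) (hγ.causal_end ht)

lemma IsFutureCausalCurve.tau_eq_tauLength_of_forall_le {p q : X}
    (hτ : L.tau p q = sSup {ℓ : ℝ≥0∞ | ∃ γ : ℝ → X, ∃ a b : ℝ,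
      L.IsFutureCausalCurve γ a b ∧ γ a = p ∧ γ b = q ∧ ℓ = L.tauLength γ a b})
    {γ : ℝ → X} {a b : ℝ} (hγ : L.IsFutureCausalCurve γ a b) (hγa : γ a = p) (hγb : γ b = q)
    (hmax : ∀ (σ : ℝ → X) (c e : ℝ), L.IsFutureCausalCurve σ c e → σ c = p → σ e = q →
      L.tauLength σ c e ≤ L.tauLength γ a b) :
    L.tau p q = L.tauLength γ a b := by
  rw [hτ]
  refine IsGreatest.csSup_eq ⟨⟨γ, a, b, hγ, hγa, hγb, rfl⟩, ?_⟩
  rintro _ ⟨σ, c, e, hσ, hσc, hσe, rfl⟩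
  exact hmax σ c e hσ hσc hσe

end LorentzianPreLengthSpace

/-- in a strongly causal Lorentzian length space, every point has an open
neighborhood `V` on which `τ|_{V × V}` is continuous. -/
theorem stronglyCausal_tau_locally_continuous {X : Type*} [MetricSpace X]
    (L : LorentzianPreLengthSpace X) (hL : L.IsLengthSpace)
    (hsc : L.StronglyCausal) (x : X) :
    ∃ V : Set X, IsOpen V ∧ x ∈ V ∧
      ContinuousOn (fun p : X × X => L.tau p.1 p.2) (V ×ˢ V) := by
  obtain ⟨Ω, hΩ, hxΩ, -, ω, hωcont, hωfin, hωtri, hωzero, hωpos, -, hmax⟩ := hL.2.2.1 x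
  obtain ⟨V, hV, hVconv, hxV, hVΩ⟩ := L.exists_isOpen_isCausallyConvex_subset hsc hΩ hxΩ
  refine ⟨V, hV, hxV, (hωcont.mono (prod_mono hVΩ hVΩ)).congr ?_⟩
  rintro ⟨p, q⟩ ⟨hp, hq⟩
  change L.tau p q = ω p q
  by_cases hpq : L.causal p q
  swap
  · rw [L.tau_eq_zero hpq, hωzero p (hVΩ hp) q (hVΩ hq) hpq]
  rcases eq_or_ne p q with rfl | hne
  · have hpΩ := hVΩ hp
    have hωpp : ω p p = 0 := ENNReal.eq_zero_of_add_self_le (hωfin p hpΩ p hpΩ)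
      (hωtri p hpΩ p hpΩ p hpΩ (L.causal_refl p) (L.causal_refl p))
    have hnchron : ¬ L.chron p p := by
      rw [← hωpos p hpΩ p hpΩ, hωpp]
      exact lt_irrefl 0
    rw [L.tau_eq_zero_of_not_chron hnchron, hωpp]
  obtain ⟨γ, a, b, hγ, hγa, hγb, -, hγlen, hγmax⟩ := hmax p (hVΩ hp) q (hVΩ hq) hpq hne
  rw [← hγlen]
  refine hγ.tau_eq_tauLength_of_forall_le (hL.2.2.2 p q) hγa hγb fun σ c e hσ hσc hσe => ?_
  exact hγmax σ c e hσ hσc hσe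
    ((hVconv.image_subset hσ (hσc ▸ hp) (hσe ▸ hq)).trans hVΩ)
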